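/- Let L generate a semigroup with Gaussian upper bounds on a domain Ω ⊂ ℝⁿ, and for a ball B and m ∈ ℕ write (I − e^{-r_B²L})^m L^{-1} = ∫₀^∞ g_{r_B,m}(t) e^{-tL} dt. Then for every α > 0 and j ≥ 1, ∫₀^∞ |g_{r_B,m}(t)| e^{-α·4^j r_B²/t} dt/t ≤ C_{m,α}·4^{−jm}. -/

import Mathlib

/-!
For `m ≥ 1`, `g_{r,m}(t) = (1 - 1)^m = 0` once `t > m r²`, and `|g_{r,m}| ≤ 2^m` everywhere.
On `(0, m r²]` the bound `e^{-β/t} ≤ m! (t/β)^m` with `β = α 4^j r²` turns the integrand into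
a multiple of `t^{m-1}`, whose integral over `(0, m r²]` is `(m r²)^m / m`; the powers of `r`
cancel and `β^{-m}` leaves the factor `4^{-jm}`.
-/

open MeasureTheory Real

/-- The function `g_{r,m}` with
`(I − e^{-r²L})^m L^{-1} = ∫₀^∞ g_{r,m}(t) e^{-tL} dt`, namely
`g_{r,m}(t) = ∑_{k=0}^m (−1)^k C(m,k) 𝟙_{t > k r²}`. -/
noncomputable def gFun (r : ℝ) (m : ℕ) (t : ℝ) : ℝ :=
  ∑ k ∈ Finset.range (m + 1),
    (-1 : ℝ) ^ k * (m.choose k : ℝ) * (if (k : ℝ) * r ^ 2 < t then 1 else 0)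

open Set
open scoped Nat

lemma abs_gFun_le (r : ℝ) (m : ℕ) (t : ℝ) : |gFun r m t| ≤ 2 ^ m := by
  calc |gFun r m t|
      ≤ ∑ k ∈ Finset.range (m + 1),
          |(-1 : ℝ) ^ k * (m.choose k : ℝ) * (if (k : ℝ) * r ^ 2 < t then 1 else 0)| :=
        Finset.abs_sum_le_sum_abs _ _
    _ ≤ ∑ k ∈ Finset.range (m + 1), (m.choose k : ℝ) := by
        gcongr with k
        split_ifs <;> simp
    _ = 2 ^ m := by exact_mod_cast Nat.sum_range_choose m

lemma gFun_eq_zero_of_lt {r : ℝ} {m : ℕ} (hm : m ≠ 0) {t : ℝ} (ht : m * r ^ 2 < t) :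
    gFun r m t = 0 := by
  have hind : ∀ k ∈ Finset.range (m + 1),
      (-1 : ℝ) ^ k * (m.choose k : ℝ) * (if (k : ℝ) * r ^ 2 < t then 1 else 0)
        = (-1 : ℝ) ^ k * 1 ^ (m - k) * (m.choose k : ℝ) := by
    intro k hk
    have hkm : (k : ℝ) ≤ m := by exact_mod_cast Finset.mem_range_succ_iff.1 hk
    have hkt : (k : ℝ) * r ^ 2 < t := by nlinarith [sq_nonneg r]
    simp [hkt]
  rw [gFun, Finset.sum_congr rfl hind, ← add_pow, neg_add_cancel, zero_pow hm]

lemma gFun_zero_of_pos (r : ℝ) {t : ℝ} (ht : 0 < t) : gFun r 0 t = 1 := by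
  simp [gFun, ht]

lemma exp_neg_le_factorial_div_pow {x : ℝ} (hx : 0 < x) (n : ℕ) : exp (-x) ≤ n ! / x ^ n := by
  rw [exp_neg, ← inv_div]
  exact inv_anti₀ (by positivity) (pow_div_factorial_le_exp _ hx.le n)

lemma not_integrableOn_Ioi_exp_neg_div_div {β : ℝ} (hβ : 0 < β) :
    ¬ IntegrableOn (fun t ↦ exp (-β / t) / t) (Ioi 0) := by
  intro h
  refine not_integrableOn_Ioi_inv (a := β) <|
    ((h.mono_set (Ioi_subset_Ioi hβ.le)).const_mul (exp 1)).mono'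
      measurable_inv.aestronglyMeasurable ?_
  refine (ae_restrict_iff' measurableSet_Ioi).2 (ae_of_all _ fun t (ht : β < t) ↦ ?_)
  have ht0 : 0 < t := hβ.trans ht
  have hexp : 1 ≤ exp 1 * exp (-β / t) := by
    rw [← exp_add, one_le_exp_iff, neg_div, ← sub_eq_add_neg, sub_nonneg]
    exact (div_le_one ht0).2 ht.le
  rw [norm_inv, norm_of_nonneg ht0.le, inv_eq_one_div, ← mul_div_assoc]
  gcongr

lemma setIntegral_Ioi_le_of_le_pow {f : ℝ → ℝ} {K M : ℝ} {n : ℕ} (hM : 0 ≤ M)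
    (hf_nonneg : ∀ t ∈ Ioc 0 M, 0 ≤ f t) (hf_le : ∀ t ∈ Ioc 0 M, f t ≤ K * t ^ n)
    (hf_zero : ∀ t, M < t → f t = 0) :
    ∫ t in Ioi 0, f t ≤ K * (M ^ (n + 1) / (n + 1)) := by
  calc ∫ t in Ioi 0, f t
      = ∫ t in Ioc 0 M, f t :=
        setIntegral_eq_of_subset_of_forall_sdiff_eq_zero measurableSet_Ioi Ioc_subset_Ioi_self
          fun t ht ↦ hf_zero t (not_le.1 fun h ↦ ht.2 ⟨ht.1, h⟩)
    _ ≤ ∫ t in Ioc 0 M, K * t ^ n :=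
        integral_mono_of_nonneg
          ((ae_restrict_iff' measurableSet_Ioc).2 (ae_of_all _ hf_nonneg))
          (continuous_const.mul (continuous_pow n)).integrableOn_Ioc
          ((ae_restrict_iff' measurableSet_Ioc).2 (ae_of_all _ hf_le))
    _ = K * (M ^ (n + 1) / (n + 1)) := by
        rw [← intervalIntegral.integral_of_le hM, intervalIntegral.integral_const_mul,
          integral_pow]
        simp

lemma integral_abs_gFun_mul_exp_div_le {r β : ℝ} {m : ℕ} (hm : m ≠ 0) (hβ : 0 < β) :
    ∫ t in Ioi 0, |gFun r m t| * exp (-β / t) / t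
      ≤ 2 ^ m * m ! * (m * r ^ 2) ^ m / (m * β ^ m) := by
  obtain ⟨n, rfl⟩ := Nat.exists_eq_succ_of_ne_zero hm
  have hbound : ∀ t ∈ Ioc 0 ((n + 1 : ℕ) * r ^ 2),
      |gFun r (n + 1) t| * exp (-β / t) / t ≤ 2 ^ (n + 1) * (n + 1)! / β ^ (n + 1) * t ^ n := by
    rintro t ⟨ht, -⟩
    have hexp := exp_neg_le_factorial_div_pow (div_pos hβ ht) (n + 1)
    rw [neg_div]
    calc |gFun r (n + 1) t| * exp (-(β / t)) / t
        ≤ 2 ^ (n + 1) * ((n + 1)! / (β / t) ^ (n + 1)) / t := by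
          gcongr
          exact abs_gFun_le r (n + 1) t
      _ = 2 ^ (n + 1) * (n + 1)! / β ^ (n + 1) * t ^ n := by
          rw [div_pow]
          field_simp
          ring
  refine (setIntegral_Ioi_le_of_le_pow (by positivity) (fun t ht ↦ by have := ht.1; positivity)
    hbound fun t ht ↦ by rw [gFun_eq_zero_of_lt hm ht]; simp).trans_eq ?_
  push_cast
  field_simp

/-- For every `m ∈ ℕ` and `α > 0` there is `C_{m,α}` such that for all
`r > 0` and all `j ≥ 1`,
`∫₀^∞ |g_{r,m}(t)| e^{-α 4^j r²/t} dt/t ≤ C_{m,α} 4^{-jm}`. -/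
theorem gFun_estimate (m : ℕ) (α : ℝ) (hα : 0 < α) :
    ∃ C : ℝ, 0 < C ∧ ∀ (r : ℝ), 0 < r → ∀ j : ℕ, 1 ≤ j →
      (∫ t in Set.Ioi (0 : ℝ),
          |gFun r m t| * Real.exp (-(α * 4 ^ j * r ^ 2) / t) / t)
        ≤ C * (4 : ℝ) ^ (-(j : ℝ) * m) := by
  rcases eq_or_ne m 0 with rfl | hm
  · -- For `m = 0` the integrand behaves like `1/t` at infinity, so the Bochner integral is `0`.
    refine ⟨1, one_pos, fun r hr j _ ↦ ?_⟩
    have hβ : 0 < α * 4 ^ j * r ^ 2 := by positivity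
    rw [integral_undef fun h ↦ not_integrableOn_Ioi_exp_neg_div_div hβ <|
      (integrableOn_congr_fun (fun t ht ↦ by simp [gFun_zero_of_pos r ht]) measurableSet_Ioi).1 h]
    positivity
  · refine ⟨2 ^ m * m ! * m ^ m / (m * α ^ m), by positivity, fun r hr j _ ↦ ?_⟩
    refine (integral_abs_gFun_mul_exp_div_le hm (by positivity)).trans_eq ?_
    rw [neg_mul, rpow_neg (by norm_num), ← Nat.cast_mul, rpow_natCast, pow_mul]
    field_simp
    ring
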